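/- arXiv:1501.06490 — 2 statements merged into one kernel-verified Lean document; each statement's English description precedes it below -/
import Mathlib

section
/- Let U be a 2×2 unitary matrix. If Ψ, Ψ' and Φ, Φ' are vectors in ℂ² satisfying i(I+U)Ψ' = (I-U)Ψ and i(I+U)Φ' = (I-U)Φ, then ⟨Ψ', Φ⟩ - ⟨Ψ, Φ'⟩ = 0, where ⟨·,·⟩ is the standard Hermitian inner product on ℂ². -/
open Matrix

/-- If the boundary data of `ψ` and `φ` satisfy the boundary condition
`i(I+U)Ψ' = (I-U)Ψ` for the same unitary `U ∈ U(2)`, then the boundary form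
`⟨Ψ', Φ⟩ - ⟨Ψ, Φ'⟩` vanishes. -/
theorem boundary_form_vanishes_of_unitary_bc
    (U : Matrix (Fin 2) (Fin 2) ℂ) (hU : U ∈ Matrix.unitaryGroup (Fin 2) ℂ)
    (Ψ Ψ' Φ Φ' : Fin 2 → ℂ)
    (hΨ : Complex.I • ((1 + U).mulVec Ψ') = (1 - U).mulVec Ψ)
    (hΦ : Complex.I • ((1 + U).mulVec Φ') = (1 - U).mulVec Φ) :
    star Ψ' ⬝ᵥ Φ - star Ψ ⬝ᵥ Φ' = 0 := by
  have hsU : Uᴴ * U = 1 := by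
    have := hU.1
    rwa [Matrix.star_eq_conjTranspose] at this
  have e1 : Uᴴ * (1 + U) = (1 + U)ᴴ := by
    rw [Matrix.mul_add, Matrix.mul_one, hsU, Matrix.conjTranspose_add,
      Matrix.conjTranspose_one, add_comm]
  have e2 : Uᴴ * (1 - U) = -((1 - U)ᴴ) := by
    rw [Matrix.mul_sub, Matrix.mul_one, hsU, Matrix.conjTranspose_sub,
      Matrix.conjTranspose_one]
    abel
  -- row vector form of the boundary relation for Ψ
  have k1 : vecMul (star Ψ) (1 - U) = Complex.I • vecMul (star Ψ') (1 + U) := by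
    have h2 := congrArg (fun v => Uᴴ.mulVec v) hΨ
    simp only [Matrix.mulVec_smul, Matrix.mulVec_mulVec, e1, e2, Matrix.neg_mulVec] at h2
    have h3 := congrArg star h2
    simp only [star_smul, star_neg, Matrix.star_mulVec, Matrix.conjTranspose_conjTranspose,
      Complex.star_def, Complex.conj_I, neg_smul, neg_neg, neg_eq_iff_eq_neg] at h3
    linear_combination (norm := module) -h3
  -- identity (1)
  have t1 : star Ψ' ⬝ᵥ (1 + U).mulVec Φ = star Ψ ⬝ᵥ (1 + U).mulVec Φ' := by
    have hI : Complex.I ≠ 0 := Complex.I_ne_zero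
    apply mul_left_cancel₀ hI
    calc Complex.I * (star Ψ' ⬝ᵥ (1 + U).mulVec Φ)
        = (Complex.I • vecMul (star Ψ') (1 + U)) ⬝ᵥ Φ := by
          rw [Matrix.dotProduct_mulVec, smul_dotProduct, smul_eq_mul]
      _ = vecMul (star Ψ) (1 - U) ⬝ᵥ Φ := by rw [k1]
      _ = star Ψ ⬝ᵥ (1 - U).mulVec Φ := by rw [Matrix.dotProduct_mulVec]
      _ = star Ψ ⬝ᵥ (Complex.I • (1 + U).mulVec Φ') := by rw [hΦ]
      _ = Complex.I * (star Ψ ⬝ᵥ (1 + U).mulVec Φ') := by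
          rw [dotProduct_smul, smul_eq_mul]
  -- identity (2)
  have t2 : star Ψ' ⬝ᵥ (1 - U).mulVec Φ = star Ψ ⬝ᵥ (1 - U).mulVec Φ' := by
    calc star Ψ' ⬝ᵥ (1 - U).mulVec Φ
        = star Ψ' ⬝ᵥ (Complex.I • (1 + U).mulVec Φ') := by rw [hΦ]
      _ = Complex.I * (star Ψ' ⬝ᵥ (1 + U).mulVec Φ') := by
          rw [dotProduct_smul, smul_eq_mul]
      _ = (Complex.I • vecMul (star Ψ') (1 + U)) ⬝ᵥ Φ' := by
          rw [smul_dotProduct, ← Matrix.dotProduct_mulVec, smul_eq_mul]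
      _ = vecMul (star Ψ) (1 - U) ⬝ᵥ Φ' := by rw [k1]
      _ = star Ψ ⬝ᵥ (1 - U).mulVec Φ' := by rw [Matrix.dotProduct_mulVec]
  have hv : ∀ v : Fin 2 → ℂ, (1 + U).mulVec v + (1 - U).mulVec v = (2:ℂ) • v := by
    intro v
    rw [← Matrix.add_mulVec]
    have h2 : (1 + U) + (1 - U) = (2:ℂ) • (1 : Matrix (Fin 2) (Fin 2) ℂ) := by
      rw [two_smul]; abel
    rw [h2, Matrix.smul_mulVec, Matrix.one_mulVec]
  have sum := congrArg₂ HAdd.hAdd t1 t2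
  rw [← dotProduct_add, ← dotProduct_add, hv Φ, hv Φ',
    dotProduct_smul, dotProduct_smul, smul_eq_mul, smul_eq_mul] at sum
  have := mul_left_cancel₀ (two_ne_zero (α := ℂ)) sum
  rw [this]; ring
end

section
/- Let H = -(l₀/l)²(ℏ²/2m) d²/dx² with Dirichlet conditions on I = [-l₀/2, l₀/2], and K = -(l̇/l)(x∘p) - (l₀/l)ḋ p where x∘p = (xp+px)/2. Then K is relatively bounded with respect to H with relative bound 0: for every ε > 0 there is C_ε ≥ 0 such that ‖Kψ‖ ≤ ε‖Hψ‖ + C_ε‖ψ‖ for all ψ in the domain of H. -/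
/-!
Up to the factor `iℏ`, `Kψ = α ψ' + β ψ` with `α` bounded on `I`, so `‖Kψ‖² ≲ ‖ψ'‖² + ‖ψ‖²`.
Integrating by parts against the Dirichlet conditions gives `‖ψ'‖² = -⟨ψ, ψ''⟩ ≤ ‖ψ‖ ‖ψ''‖`,
and `2ab ≤ δ²a² + b²/δ²` turns this into `‖ψ'‖²` being at most `δ² ‖ψ''‖²` plus a multiple of
`‖ψ‖²`, for every `δ > 0`. Since `‖Hψ‖` is a fixed positive multiple of `‖ψ''‖`, the relative
bound is `0`.
-/

open MeasureTheory intervalIntegral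

/-- The `L²` norm of a function on the interval `[-l₀/2, l₀/2]`. -/
noncomputable def l2NormOn (l₀ : ℝ) (f : ℝ → ℂ) : ℝ :=
  Real.sqrt (∫ x in (-(l₀ / 2))..(l₀ / 2), ‖f x‖ ^ 2)

open Set ComplexConjugate

theorem integral_norm_mul_norm_le_sqrt_mul_sqrt {α E F : Type*} [MeasurableSpace α]
    {μ : Measure α} [NormedAddCommGroup E] [NormedAddCommGroup F] {f : α → E} {g : α → F}
    (hf : MemLp f 2 μ) (hg : MemLp g 2 μ) :
    ∫ x, ‖f x‖ * ‖g x‖ ∂μ ≤ √(∫ x, ‖f x‖ ^ 2 ∂μ) * √(∫ x, ‖g x‖ ^ 2 ∂μ) := by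
  simpa [Real.sqrt_eq_rpow] using
    integral_mul_norm_le_Lp_mul_Lq (μ := μ) (f := fun x => ‖f x‖) (g := fun x => ‖g x‖)
      Real.HolderConjugate.two_two (by simpa using hf.norm) (by simpa using hg.norm)

theorem aestronglyMeasurable_of_hasDerivAt_Ioo {E : Type*} [NormedAddCommGroup E]
    [NormedSpace ℝ E] [CompleteSpace E] {f f' : ℝ → E} {a b : ℝ}
    (h : ∀ x ∈ Ioo a b, HasDerivAt f (f' x) x) :
    AEStronglyMeasurable f' (volume.restrict (Ioc a b)) := by
  refine (stronglyMeasurable_deriv f).aestronglyMeasurable.congr ?_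
  rw [← Measure.restrict_congr_set Ioo_ae_eq_Ioc]
  exact ae_restrict_of_forall_mem measurableSet_Ioo fun x hx => (h x hx).deriv

section Interpolation

variable {𝕜 : Type*} [RCLike 𝕜] {a b : ℝ} {ψ ψ' ψ'' : ℝ → 𝕜}

theorem integral_norm_sq_deriv_le_of_eq_zero (hab : a ≤ b)
    (hψ : ∀ x ∈ Icc a b, HasDerivWithinAt ψ (ψ' x) (Icc a b) x)
    (hψ' : ∀ x ∈ Icc a b, HasDerivWithinAt ψ' (ψ'' x) (Icc a b) x)
    (hψ'' : IntervalIntegrable ψ'' volume a b) (ha : ψ a = 0) (hb : ψ b = 0) :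
    ∫ x in a..b, ‖ψ' x‖ ^ 2 ≤ ∫ x in a..b, ‖ψ x‖ * ‖ψ'' x‖ := by
  rw [← uIcc_of_le hab] at hψ hψ'
  have hcont : ContinuousOn ψ (uIcc a b) := fun x hx => (hψ x hx).continuousWithinAt
  have hcont' : ContinuousOn ψ' (uIcc a b) := fun x hx => (hψ' x hx).continuousWithinAt
  have hint' : IntervalIntegrable (fun x => conj (ψ' x) * ψ' x) volume a b :=
    ((RCLike.continuous_conj.comp_continuousOn hcont').mul hcont').intervalIntegrable
  have hint'' : IntervalIntegrable (fun x => conj (ψ x) * ψ'' x) volume a b :=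
    hψ''.continuousOn_mul (RCLike.continuous_conj.comp_continuousOn hcont)
  have hibp := integral_deriv_mul_eq_sub_of_hasDerivWithinAt (fun x hx => (hψ x hx).star) hψ'
    (RCLike.continuous_conj.comp_continuousOn hcont').intervalIntegrable hψ''
  simp only [RCLike.star_def, ha, hb, map_zero, zero_mul, sub_zero] at hibp
  have hparts : ∫ x in a..b, conj (ψ' x) * ψ' x = -∫ x in a..b, conj (ψ x) * ψ'' x :=
    eq_neg_of_add_eq_zero_left ((integral_add hint' hint'').symm.trans hibp)
  have hnonneg : 0 ≤ ∫ x in a..b, ‖ψ' x‖ ^ 2 := integral_nonneg hab fun x _ => sq_nonneg _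
  calc ∫ x in a..b, ‖ψ' x‖ ^ 2 = ‖∫ x in a..b, conj (ψ' x) * ψ' x‖ := by
        simp_rw [RCLike.conj_mul, ← RCLike.ofReal_pow, RCLike.intervalIntegral_ofReal,
          RCLike.norm_ofReal, abs_of_nonneg hnonneg]
    _ = ‖∫ x in a..b, conj (ψ x) * ψ'' x‖ := by rw [hparts, norm_neg]
    _ ≤ ∫ x in a..b, ‖conj (ψ x) * ψ'' x‖ := norm_integral_le_integral_norm hab
    _ = ∫ x in a..b, ‖ψ x‖ * ‖ψ'' x‖ := by simp

theorem integral_norm_sq_deriv_le_sqrt_mul_sqrt (hab : a ≤ b)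
    (hψ : ∀ x ∈ Icc a b, HasDerivWithinAt ψ (ψ' x) (Icc a b) x)
    (hψ' : ∀ x ∈ Icc a b, HasDerivWithinAt ψ' (ψ'' x) (Icc a b) x)
    (hψ'' : IntervalIntegrable (fun x => ‖ψ'' x‖ ^ 2) volume a b) (ha : ψ a = 0) (hb : ψ b = 0) :
    ∫ x in a..b, ‖ψ' x‖ ^ 2 ≤ √(∫ x in a..b, ‖ψ x‖ ^ 2) * √(∫ x in a..b, ‖ψ'' x‖ ^ 2) := by
  have hcont : ContinuousOn ψ (Icc a b) := fun x hx => (hψ x hx).continuousWithinAt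
  have hψL2 : MemLp ψ 2 (volume.restrict (Ioc a b)) :=
    (memLp_two_iff_integrable_sq_norm
      ((hcont.mono Ioc_subset_Icc_self).aestronglyMeasurable measurableSet_Ioc)).2
      ((((continuous_norm.comp_continuousOn hcont).pow 2).integrableOn_Icc).mono_set
        Ioc_subset_Icc_self)
  have hψ''L2 : MemLp ψ'' 2 (volume.restrict (Ioc a b)) :=
    (memLp_two_iff_integrable_sq_norm (aestronglyMeasurable_of_hasDerivAt_Ioo fun x hx =>
      (hψ' x (Ioo_subset_Icc_self hx)).hasDerivAt (Icc_mem_nhds hx.1 hx.2))).2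
      ((intervalIntegrable_iff_integrableOn_Ioc_of_le hab).1 hψ'')
  calc ∫ x in a..b, ‖ψ' x‖ ^ 2 ≤ ∫ x in a..b, ‖ψ x‖ * ‖ψ'' x‖ :=
        integral_norm_sq_deriv_le_of_eq_zero hab hψ hψ'
          ((intervalIntegrable_iff_integrableOn_Ioc_of_le hab).2 (hψ''L2.integrable one_le_two))
          ha hb
    _ ≤ √(∫ x in a..b, ‖ψ x‖ ^ 2) * √(∫ x in a..b, ‖ψ'' x‖ ^ 2) := by
        simpa only [integral_of_le hab] using integral_norm_mul_norm_le_sqrt_mul_sqrt hψL2 hψ''L2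

end Interpolation

theorem integral_norm_sq_le_of_norm_le {E F G : Type*} [NormedAddCommGroup E]
    [NormedAddCommGroup F] [NormedAddCommGroup G] {a b A B : ℝ} (hab : a ≤ b)
    {k : ℝ → E} {u : ℝ → F} {v : ℝ → G} (hk : ContinuousOn k (Icc a b))
    (hu : ContinuousOn u (Icc a b)) (hv : ContinuousOn v (Icc a b))
    (h : ∀ x ∈ Icc a b, ‖k x‖ ≤ A * ‖u x‖ + B * ‖v x‖) :
    ∫ x in a..b, ‖k x‖ ^ 2 ≤
      2 * A ^ 2 * (∫ x in a..b, ‖u x‖ ^ 2) + 2 * B ^ 2 * ∫ x in a..b, ‖v x‖ ^ 2 := by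
  have hsq {w : ℝ → ℝ} (hw : ContinuousOn w (Icc a b)) :
      IntervalIntegrable (fun x => w x ^ 2) volume a b :=
    (hw.pow 2).intervalIntegrable_of_Icc hab
  have hu₂ : IntervalIntegrable (fun x => ‖u x‖ ^ 2) volume a b :=
    hsq (continuous_norm.comp_continuousOn hu)
  have hv₂ : IntervalIntegrable (fun x => ‖v x‖ ^ 2) volume a b :=
    hsq (continuous_norm.comp_continuousOn hv)
  rw [← intervalIntegral.integral_const_mul, ← intervalIntegral.integral_const_mul,
    ← integral_add (hu₂.const_mul _) (hv₂.const_mul _)]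
  refine integral_mono_on hab (hsq (continuous_norm.comp_continuousOn hk))
    ((hu₂.const_mul _).add (hv₂.const_mul _)) fun x hx => ?_
  have hkx := h x hx
  nlinarith [norm_nonneg (k x), sq_nonneg (A * ‖u x‖ - B * ‖v x‖)]

theorem l2NormOn_const_mul (l₀ : ℝ) (z : ℂ) (f : ℝ → ℂ) :
    l2NormOn l₀ (fun x => z * f x) = ‖z‖ * l2NormOn l₀ f := by
  simp only [l2NormOn, norm_mul, mul_pow, intervalIntegral.integral_const_mul,
    Real.sqrt_mul (sq_nonneg _), Real.sqrt_sq (norm_nonneg z)]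

/- With `S = ‖Kψ‖²`, `P = ‖ψ'‖²`, `Q = ‖ψ‖²`, `R = ‖ψ''‖²`: the interpolation bound `P ≤ √Q √R`
lets `2A²P` be absorbed into `δ²R` for any `δ > 0`, at the price of `A⁴Q/δ²`. -/
theorem sqrt_le_mul_sqrt_add_mul_sqrt {A B δ P Q R S : ℝ} (hδ : 0 < δ) (hB : 0 ≤ B)
    (hQ : 0 ≤ Q) (hP : P ≤ √Q * √R) (hS : S ≤ 2 * A ^ 2 * P + 2 * B ^ 2 * Q) :
    √S ≤ δ * √R + (A ^ 2 / δ + 2 * B) * √Q := by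
  set q := √Q
  set r := √R
  set t := A ^ 2 / δ
  have hq : 0 ≤ q := Real.sqrt_nonneg Q
  have hr : 0 ≤ r := Real.sqrt_nonneg R
  have ht : 0 ≤ t := by positivity
  have hδt : δ * t = A ^ 2 := mul_div_cancel₀ _ hδ.ne'
  rw [Real.sqrt_le_left (by positivity)]
  calc S ≤ 2 * (δ * t) * (q * r) + 2 * B ^ 2 * q ^ 2 := by
        rw [hδt, Real.sq_sqrt hQ]; nlinarith [sq_nonneg A]
    _ ≤ (δ * r + (t + 2 * B) * q) ^ 2 := by
        nlinarith [sq_nonneg (δ * r - t * q), mul_nonneg (mul_nonneg hδ.le hB) (mul_nonneg hr hq),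
          mul_nonneg (mul_nonneg ht hB) (mul_nonneg hq hq), mul_nonneg (sq_nonneg B) (sq_nonneg q)]

noncomputable def geometricTerm (l₀ l ldot ddot ℏ : ℝ) (ψ ψ' : ℝ → ℂ) (x : ℝ) : ℂ :=
  -(ldot / l : ℂ) * ((x : ℂ) * (-Complex.I * ℏ * ψ' x) - Complex.I * (ℏ / 2) * ψ x)
    - ((l₀ / l) * ddot : ℂ) * (-Complex.I * ℏ * ψ' x)

theorem continuousOn_geometricTerm (l₀ l ldot ddot ℏ : ℝ) {ψ ψ' : ℝ → ℂ} {s : Set ℝ}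
    (hψ : ContinuousOn ψ s) (hψ' : ContinuousOn ψ' s) :
    ContinuousOn (geometricTerm l₀ l ldot ddot ℏ ψ ψ') s := by
  unfold geometricTerm
  fun_prop

theorem norm_geometricTerm_le (l₀ l ldot ddot ℏ : ℝ) (ψ ψ' : ℝ → ℂ) {x : ℝ}
    (hx : |x| ≤ l₀ / 2) :
    ‖geometricTerm l₀ l ldot ddot ℏ ψ ψ' x‖ ≤
      |ℏ| * (|ldot / l| * (l₀ / 2) + |l₀ / l * ddot|) * ‖ψ' x‖ +
        |ℏ| * |ldot / (2 * l)| * ‖ψ x‖ := by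
  have hform : geometricTerm l₀ l ldot ddot ℏ ψ ψ' x = Complex.I * ℏ *
      (((ldot / l * x + l₀ / l * ddot : ℝ) : ℂ) * ψ' x + ((ldot / (2 * l) : ℝ) : ℂ) * ψ x) := by
    unfold geometricTerm; push_cast; ring
  have hcoeff : |ldot / l * x + l₀ / l * ddot| ≤ |ldot / l| * (l₀ / 2) + |l₀ / l * ddot| :=
    (abs_add_le _ _).trans (by rw [abs_mul]; gcongr)
  rw [hform, norm_mul, norm_mul, Complex.norm_I, one_mul, Complex.norm_real, Real.norm_eq_abs,
    mul_assoc, mul_assoc, ← mul_add]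
  gcongr
  refine (norm_add_le _ _).trans ?_
  simp only [norm_mul, Complex.norm_real, Real.norm_eq_abs]
  gcongr

/-- The geometric term `K = -(l̇/l)(x∘p) - (l₀/l)ḋ p`, with `x∘p = xp - iℏ/2`,
is relatively bounded with respect to the Dirichlet Hamiltonian
`H = -(l₀/l)²(ℏ²/2m) d²/dx²` on `I = [-l₀/2, l₀/2]` with relative bound `0`. -/
theorem geometric_term_relatively_bounded
    (l₀ l ldot ddot m ℏ : ℝ) (hl₀ : 0 < l₀) (hl : 0 < l) (hm : 0 < m) (hℏ : 0 < ℏ) :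
    ∀ ε > (0 : ℝ), ∃ C ≥ (0 : ℝ),
      ∀ ψ ψ' ψ'' : ℝ → ℂ,
        (∀ x ∈ Set.Icc (-(l₀ / 2)) (l₀ / 2),
            HasDerivWithinAt ψ (ψ' x) (Set.Icc (-(l₀ / 2)) (l₀ / 2)) x) →
        (∀ x ∈ Set.Icc (-(l₀ / 2)) (l₀ / 2),
            HasDerivWithinAt ψ' (ψ'' x) (Set.Icc (-(l₀ / 2)) (l₀ / 2)) x) →
        IntervalIntegrable (fun x => ‖ψ'' x‖ ^ 2) volume (-(l₀ / 2)) (l₀ / 2) →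
        ψ (-(l₀ / 2)) = 0 → ψ (l₀ / 2) = 0 →
        l2NormOn l₀ (fun x =>
            -(ldot / l : ℂ) * ((x : ℂ) * (-Complex.I * ℏ * ψ' x)
              - Complex.I * (ℏ / 2) * ψ x)
            - ((l₀ / l) * ddot : ℂ) * (-Complex.I * ℏ * ψ' x))
          ≤ ε * l2NormOn l₀ (fun x => -((l₀ / l) ^ 2 * (ℏ ^ 2 / (2 * m)) : ℂ) * ψ'' x)
            + C * l2NormOn l₀ ψ := by
  intro ε hε
  have hab : -(l₀ / 2) ≤ l₀ / 2 := by linarith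
  set c := (l₀ / l) ^ 2 * (ℏ ^ 2 / (2 * m))
  have hc : 0 < c := by positivity
  set A := |ℏ| * (|ldot / l| * (l₀ / 2) + |l₀ / l * ddot|)
  set B := |ℏ| * |ldot / (2 * l)|
  refine ⟨A ^ 2 / (ε * c) + 2 * B, by positivity, fun ψ ψ' ψ'' hψ hψ' hψ'' ha hb => ?_⟩
  have hcont : ContinuousOn ψ (Icc (-(l₀ / 2)) (l₀ / 2)) :=
    fun x hx => (hψ x hx).continuousWithinAt
  have hcont' : ContinuousOn ψ' (Icc (-(l₀ / 2)) (l₀ / 2)) :=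
    fun x hx => (hψ' x hx).continuousWithinAt
  have hK := integral_norm_sq_le_of_norm_le hab
    (continuousOn_geometricTerm l₀ l ldot ddot ℏ hcont hcont') hcont' hcont
    fun x hx => norm_geometricTerm_le l₀ l ldot ddot ℏ ψ ψ' (abs_le.2 hx)
  have hP := integral_norm_sq_deriv_le_sqrt_mul_sqrt hab hψ hψ' hψ'' ha hb
  have hnorm : ‖-((l₀ / l) ^ 2 * (ℏ ^ 2 / (2 * m)) : ℂ)‖ = c := by
    rw [norm_neg, show ((l₀ / l) ^ 2 * (ℏ ^ 2 / (2 * m)) : ℂ) = (c : ℂ) by push_cast [c]; ring,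
      Complex.norm_real, Real.norm_of_nonneg hc.le]
  rw [l2NormOn_const_mul, hnorm, ← mul_assoc]
  exact sqrt_le_mul_sqrt_add_mul_sqrt (mul_pos hε hc) (by positivity)
    (integral_nonneg hab fun x _ => sq_nonneg _) hP hK
end
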